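/- Let A be a semiprime 2-torsion free associative algebra and Q a subalgebra of Q_s(A) containing A. Then the Lie algebras A⁽⁻⁾/Z(A) and Q⁽⁻⁾/Z(Q) are semiprime, and Q⁽⁻⁾/Z(Q) is a Lie algebra of quotients of A⁽⁻⁾/Z(A). -/

import Mathlib

/-!
Semiprimeness is used elementwise: `u A u = 0 = u²` forces `u = 0`, and this passes to `Q`
because `x u ∈ A` for `x` in a dense ideal. If `K` is a Lie ideal with `⁅K, K⁆` central, then
`⁅k, ⁅k, a⁆⁆` is central for `k ∈ K`, which forces `⁅k, ⁅k, a⁆⁆ = 0`, then `2 ⁅k, a⁆ ⁅k, b⁆ = 0`,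
so `⁅k, a⁆ b ⁅k, a⁆ = 0` for all `b` and `⁅k, a⁆ = 0`. For the quotient property take for `K` a
dense ideal `I` of `A` with `q I + I q ⊆ A`: an `x` with `⁅x, I⁆ ⊆ A` central commutes with `I`,
hence with `A` and so with `Q`, since an element of `Q` is determined by its products with a
dense ideal.
-/

section
variable (R : Type*) [NonUnitalRing R]

/-- The centre of the associative ring `R`. -/
def ringCentre : Set R := {z | ∀ w : R, z * w = w * z}

/-- `I` is a two-sided ideal of the subring `A` of `R`. -/
def IsIdealOfSub (A : NonUnitalSubring R) (I : AddSubgroup R) : Prop :=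
  (I : Set R) ⊆ A ∧ ∀ a ∈ A, ∀ x ∈ I, a * x ∈ I ∧ x * a ∈ I

/-- `I` is an essential ideal of the subring `A` of `R`. -/
def IsEssentialIdealOfSub (A : NonUnitalSubring R) (I : AddSubgroup R) : Prop :=
  IsIdealOfSub R A I ∧
    ∀ J : AddSubgroup R, IsIdealOfSub R A J → J ≠ ⊥ → ∃ x ∈ I, x ∈ J ∧ x ≠ 0

/-- The subring `A` of `R` is semiprime. -/
def IsSemiprimeSub (A : NonUnitalSubring R) : Prop :=
  ∀ I : AddSubgroup R, IsIdealOfSub R A I → (∀ x ∈ I, ∀ y ∈ I, x * y = 0) → I = ⊥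

/-- `R` (playing the role of `Q`) sits inside the Martindale symmetric ring of
quotients `Q_s(A)` of its subring `A`. -/
def IsSymmetricQuotientRingOf (A : NonUnitalSubring R) : Prop :=
  (∀ q : R, ∃ I : AddSubgroup R, IsEssentialIdealOfSub R A I ∧
      ∀ x ∈ I, q * x ∈ A ∧ x * q ∈ A) ∧
    ∀ q : R, q ≠ 0 → ∀ I : AddSubgroup R, IsEssentialIdealOfSub R A I →
      (∃ x ∈ I, x * q ≠ 0) ∧ (∃ x ∈ I, q * x ≠ 0)

/-- `K` is a Lie ideal of the subring `A` of `R` (for the commutator bracket). -/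
def IsLieIdealOfSub (A : NonUnitalSubring R) (K : AddSubgroup R) : Prop :=
  (K : Set R) ⊆ A ∧ ∀ a ∈ A, ∀ k ∈ K, a * k - k * a ∈ K

/-- Semiprimeness of the Lie algebra `A⁽⁻⁾/Z(A)`:
every Lie ideal of `A` whose bracket lands in the centre is central. -/
def LieModCentreSemiprime (A : NonUnitalSubring R) : Prop :=
  ∀ K : AddSubgroup R, IsLieIdealOfSub R A K →
    (∀ x ∈ K, ∀ y ∈ K, x * y - y * x ∈ ringCentre R) →
    (K : Set R) ⊆ ringCentre R

end

section
variable {R : Type*} [NonUnitalRing R]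

theorem ringCentre.zero_mem : (0 : R) ∈ ringCentre R := fun w => by
  rw [zero_mul, mul_zero]

theorem ringCentre.neg_mem {z : R} (h : z ∈ ringCentre R) : -z ∈ ringCentre R := fun w => by
  rw [neg_mul, mul_neg, h w]

theorem lie_mul_eq_zero_of_commute {x s y : R} (hy : x * y = y * x)
    (hsy : x * (s * y) = s * y * x) : ⁅x, s⁆ * y = 0 := by
  rw [Ring.lie_def, sub_mul, mul_assoc, mul_assoc, hy, hsy, mul_assoc, sub_self]

/-- Semiprimeness tested on single elements; `u * u = 0` is assumed too since `B` need not be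
unital. -/
def IsElementwiseSemiprime (B : NonUnitalSubring R) : Prop :=
  ∀ u ∈ B, u * u = 0 → (∀ b ∈ B, u * (b * u) = 0) → u = 0

theorem IsElementwiseSemiprime.eq_zero_of_mem_ringCentre {B : NonUnitalSubring R}
    (hB : IsElementwiseSemiprime B) {z : R} (hzB : z ∈ B) (hz : z ∈ ringCentre R)
    (hzz : z * z = 0) : z = 0 :=
  hB z hzB hzz fun b _ => by rw [← mul_assoc, hz b, mul_assoc, hzz, mul_zero]

variable {A : NonUnitalSubring R}

/-- The left annihilator of `T` inside `T` is a square-zero ideal containing `u`. -/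
theorem IsSemiprimeSub.eq_zero_of_mul_ideal_eq_zero (hsemi : IsSemiprimeSub R A)
    {T : AddSubgroup R} (hT : IsIdealOfSub R A T) {u : R} (hu : u ∈ T)
    (h : ∀ y ∈ T, u * y = 0) : u = 0 := by
  let J : AddSubgroup R := T ⊓ ⨅ y ∈ T, (AddMonoidHom.mulRight y).ker
  have mem_J : ∀ {x}, x ∈ J ↔ x ∈ T ∧ ∀ y ∈ T, x * y = 0 := by
    simp [J, AddSubgroup.mem_iInf]
  have hJ : IsIdealOfSub R A J := by
    refine ⟨fun x hx => hT.1 (mem_J.1 hx).1, fun a ha x hx => ?_⟩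
    obtain ⟨hxT, hx0⟩ := mem_J.1 hx
    refine ⟨mem_J.2 ⟨(hT.2 a ha x hxT).1, fun y hy => ?_⟩,
      mem_J.2 ⟨(hT.2 a ha x hxT).2, fun y hy => ?_⟩⟩
    · rw [mul_assoc, hx0 y hy, mul_zero]
    · rw [mul_assoc, hx0 _ (hT.2 a ha y hy).1]
  have hJ0 : J = ⊥ := hsemi J hJ fun x hx y hy => (mem_J.1 hx).2 y (mem_J.1 hy).1
  simpa [hJ0] using mem_J.2 ⟨hu, h⟩

/-- `u` lies in the ideal `{x ∈ A | u x = 0, u A x = 0}` and annihilates it on the left. -/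
theorem IsSemiprimeSub.isElementwiseSemiprime (hsemi : IsSemiprimeSub R A) :
    IsElementwiseSemiprime A := by
  intro u hu huu huAu
  let T : AddSubgroup R := A.toAddSubgroup ⊓ (AddMonoidHom.mulLeft u).ker ⊓
    ⨅ a ∈ A, (AddMonoidHom.mulLeft (u * a)).ker
  have mem_T : ∀ {x}, x ∈ T ↔ (x ∈ A ∧ u * x = 0) ∧ ∀ a ∈ A, u * a * x = 0 := by
    simp [T, AddSubgroup.mem_iInf]
  have hT : IsIdealOfSub R A T := by
    refine ⟨fun x hx => (mem_T.1 hx).1.1, fun a ha x hx => ?_⟩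
    obtain ⟨⟨hxA, hux⟩, huax⟩ := mem_T.1 hx
    refine ⟨mem_T.2 ⟨⟨A.mul_mem ha hxA, ?_⟩, fun b hb => ?_⟩,
      mem_T.2 ⟨⟨A.mul_mem hxA ha, ?_⟩, fun b hb => ?_⟩⟩
    · rw [← mul_assoc, huax a ha]
    · rw [← mul_assoc, mul_assoc u, huax _ (A.mul_mem hb ha)]
    · rw [← mul_assoc, hux, zero_mul]
    · rw [← mul_assoc, huax b hb, zero_mul]
  refine hsemi.eq_zero_of_mul_ideal_eq_zero hT ?_ fun y hy => (mem_T.1 hy).1.2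
  exact mem_T.2 ⟨⟨hu, huu⟩, fun a ha => by rw [mul_assoc, huAu a ha]⟩

end

namespace IsSymmetricQuotientRingOf
variable {R : Type*} [NonUnitalRing R] {A : NonUnitalSubring R}

theorem eq_zero_of_mul_eq_zero (hQs : IsSymmetricQuotientRingOf R A) {I : AddSubgroup R}
    (hI : IsEssentialIdealOfSub R A I) {c : R} (h : ∀ x ∈ I, c * x = 0) : c = 0 := by
  by_contra hc
  obtain ⟨x, hxI, hx⟩ := (hQs.2 c hc I hI).2
  exact hx (h x hxI)

theorem eq_zero_of_mul_eq_zero_left (hQs : IsSymmetricQuotientRingOf R A) {I : AddSubgroup R}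
    (hI : IsEssentialIdealOfSub R A I) {c : R} (h : ∀ x ∈ I, x * c = 0) : c = 0 := by
  by_contra hc
  obtain ⟨x, hxI, hx⟩ := (hQs.2 c hc I hI).1
  exact hx (h x hxI)

theorem eq_zero_of_add_self_eq_zero (hQs : IsSymmetricQuotientRingOf R A)
    (h2 : ∀ x ∈ A, x + x = 0 → x = 0) {q : R} (hq : q + q = 0) : q = 0 := by
  obtain ⟨I, hI, hIq⟩ := hQs.1 q
  refine hQs.eq_zero_of_mul_eq_zero_left hI fun x hx => h2 _ (hIq x hx).2 ?_
  rw [← mul_add, hq, mul_zero]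

theorem isElementwiseSemiprime_top (hQs : IsSymmetricQuotientRingOf R A)
    (hA : IsElementwiseSemiprime A) : IsElementwiseSemiprime (⊤ : NonUnitalSubring R) := by
  intro u _ _ huRu
  obtain ⟨I, hI, hIu⟩ := hQs.1 u
  refine hQs.eq_zero_of_mul_eq_zero_left hI fun x hx => hA _ (hIu x hx).2 ?_ fun a _ => ?_
  · rw [mul_assoc, huRu x trivial, mul_zero]
  · rw [show x * u * (a * (x * u)) = x * (u * (a * x * u)) by simp only [mul_assoc],
      huRu _ trivial, mul_zero]

theorem mem_ringCentre_of_commute (hQs : IsSymmetricQuotientRingOf R A) {x : R}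
    (hx : ∀ a ∈ A, x * a = a * x) : x ∈ ringCentre R := by
  intro q
  obtain ⟨I, hI, hIq⟩ := hQs.1 q
  refine sub_eq_zero.1 (hQs.eq_zero_of_mul_eq_zero hI fun y hy => ?_)
  exact lie_mul_eq_zero_of_commute (hx y (hI.1.1 hy)) (hx _ (hIq y hy).1)

theorem mem_ringCentre_of_commute_ideal (hQs : IsSymmetricQuotientRingOf R A)
    {I : AddSubgroup R} (hI : IsEssentialIdealOfSub R A I) {x : R}
    (hx : ∀ y ∈ I, x * y = y * x) : x ∈ ringCentre R := by
  refine hQs.mem_ringCentre_of_commute fun a ha => sub_eq_zero.1 ?_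
  exact hQs.eq_zero_of_mul_eq_zero hI fun y hy =>
    lie_mul_eq_zero_of_commute (hx y hy) (hx _ (hI.1.2 a ha y hy).1)

end IsSymmetricQuotientRingOf

section Lie
variable {R : Type*} [NonUnitalRing R] {B : NonUnitalSubring R}

theorem NonUnitalSubring.lie_mem {x y : R} (hx : x ∈ B) (hy : y ∈ B) : ⁅x, y⁆ ∈ B :=
  B.sub_mem (B.mul_mem hx hy) (B.mul_mem hy hx)

namespace IsElementwiseSemiprime

/-- Both `z = ⁅k, ⁅k, a⁆⁆` and `⁅k, ⁅k, k a⁆⁆ = k z` are central, hence `z ⁅k, b⁆ = 0` for all `b`;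
taking `b = ⁅k, a⁆` gives `z² = 0`. -/
theorem lie_lie_eq_zero (hB : IsElementwiseSemiprime B) {k : R} (hk : k ∈ B)
    (hc : ∀ a ∈ B, ⁅k, ⁅k, a⁆⁆ ∈ ringCentre R) {a : R} (ha : a ∈ B) : ⁅k, ⁅k, a⁆⁆ = 0 := by
  set z := ⁅k, ⁅k, a⁆⁆ with hz_def
  have hz : z ∈ ringCentre R := hc a ha
  have hkz : k * z ∈ ringCentre R := by
    have e : ⁅k, ⁅k, k * a⁆⁆ = k * z := by simp only [hz_def, Ring.lie_def]; noncomm_ring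
    exact e ▸ hc _ (B.mul_mem hk ha)
  have hz_mul_lie : ∀ b : R, z * ⁅k, b⁆ = 0 := fun b => by
    rw [Ring.lie_def, mul_sub, ← mul_assoc, hz k, hkz b, hz (b * k), mul_assoc, sub_self]
  have hzB : z ∈ B := NonUnitalSubring.lie_mem hk (NonUnitalSubring.lie_mem hk ha)
  exact hB.eq_zero_of_mem_ringCentre hzB hz (hz_mul_lie _)

theorem lie_mul_lie_eq_zero (htor : ∀ x ∈ B, x + x = 0 → x = 0) {k : R} (hk : k ∈ B)
    (hkk : ∀ a ∈ B, ⁅k, ⁅k, a⁆⁆ = 0) {a b : R} (ha : a ∈ B) (hb : b ∈ B) :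
    ⁅k, a⁆ * ⁅k, b⁆ = 0 := by
  have key : ⁅k, a⁆ * ⁅k, b⁆ + ⁅k, a⁆ * ⁅k, b⁆ =
      ⁅k, ⁅k, a * b⁆⁆ - ⁅k, ⁅k, a⁆⁆ * b - a * ⁅k, ⁅k, b⁆⁆ := by
    simp only [Ring.lie_def]; noncomm_ring
  refine htor _ (B.mul_mem (NonUnitalSubring.lie_mem hk ha) (NonUnitalSubring.lie_mem hk hb)) ?_
  rw [key, hkk _ (B.mul_mem ha hb), hkk a ha, hkk b hb, zero_mul, mul_zero, sub_zero, sub_zero]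

theorem commute_of_lie_lie_mem_ringCentre (hB : IsElementwiseSemiprime B)
    (htor : ∀ x ∈ B, x + x = 0 → x = 0) {k : R} (hk : k ∈ B)
    (hc : ∀ a ∈ B, ⁅k, ⁅k, a⁆⁆ ∈ ringCentre R) {a : R} (ha : a ∈ B) : k * a = a * k := by
  have hkk := fun b hb => hB.lie_lie_eq_zero hk hc (a := b) hb
  have hsq := fun b hb => lie_mul_lie_eq_zero htor hk hkk ha (b := b) hb
  suffices ⁅k, a⁆ = 0 from sub_eq_zero.1 this
  refine hB _ (NonUnitalSubring.lie_mem hk ha) (hsq a ha) fun r hr => ?_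
  have e : ⁅k, a⁆ * (r * ⁅k, a⁆) = ⁅k, a⁆ * ⁅k, r * a⁆ - ⁅k, a⁆ * ⁅k, r⁆ * a := by
    simp only [Ring.lie_def]; noncomm_ring
  rw [e, hsq _ (B.mul_mem hr ha), hsq r hr, zero_mul, sub_zero]

theorem lieModCentreSemiprime (hB : IsElementwiseSemiprime B)
    (htor : ∀ x ∈ B, x + x = 0 → x = 0)
    (hcent : ∀ x ∈ B, (∀ b ∈ B, x * b = b * x) → x ∈ ringCentre R) :
    LieModCentreSemiprime R B := by
  intro K hK hKK k hk
  refine hcent k (hK.1 hk) fun a ha =>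
    hB.commute_of_lie_lie_mem_ringCentre htor (hK.1 hk) (fun b hb => ?_) ha
  convert ringCentre.neg_mem (hKK k hk _ (hK.2 b hb k hk)) using 1
  simp only [Ring.lie_def]; noncomm_ring

end IsElementwiseSemiprime

end Lie

theorem IsIdealOfSub.isLieIdealOfSub {R : Type*} [NonUnitalRing R] {A : NonUnitalSubring R}
    {I : AddSubgroup R} (hI : IsIdealOfSub R A I) : IsLieIdealOfSub R A I :=
  ⟨hI.1, fun a ha k hk => I.sub_mem (hI.2 a ha k hk).1 (hI.2 a ha k hk).2⟩

/-- For `z = ⁅x, k⁆` central, `⁅x, k²⁆ = 2 z k` is central, so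
`2 z² = 2 ⁅x, z k⁆ = ⁅x, ⁅x, k²⁆⁆ = 0`. -/
theorem IsElementwiseSemiprime.lie_eq_zero_of_lie_mem_ringCentre {R : Type*} [NonUnitalRing R]
    {A : NonUnitalSubring R} (hA : IsElementwiseSemiprime A)
    (h2 : ∀ x ∈ A, x + x = 0 → x = 0) {I : AddSubgroup R} (hI : IsIdealOfSub R A I) {x : R}
    (hc : ∀ k ∈ I, ⁅x, k⁆ ∈ ringCentre R) (hxA : ∀ k ∈ I, ⁅x, k⁆ ∈ A) {k : R} (hk : k ∈ I) :
    ⁅x, k⁆ = 0 := by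
  set z := ⁅x, k⁆ with hz_def
  have hz : z ∈ ringCentre R := hc k hk
  have hzz_eq : z * z = ⁅x, z * k⁆ := by
    rw [Ring.lie_def, ← mul_assoc x z k, ← hz x, mul_assoc, mul_assoc z k x, ← mul_sub]; rfl
  have hkk_eq : ⁅x, k * k⁆ = z * k + z * k := by
    nth_rewrite 2 [hz k]; rw [hz_def]; simp only [Ring.lie_def]; noncomm_ring
  have hkk : x * ⁅x, k * k⁆ = ⁅x, k * k⁆ * x := (hc _ (hI.2 k (hI.1 hk) k hk).1 x).symm
  have hzz2 : z * z + z * z = 0 := by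
    rw [hzz_eq, ← sub_eq_zero.2 hkk, hkk_eq]; simp only [Ring.lie_def]; noncomm_ring
  have hzA : z ∈ A := hxA k hk
  exact hA.eq_zero_of_mem_ringCentre hzA hz (h2 _ (A.mul_mem hzA hzA) hzz2)

/-- If `A` is a semiprime `2`-torsion free associative algebra and
`A ⊆ Q ⊆ Q_s(A)` (here `R` plays the role of `Q`), then the Lie algebras
`A⁽⁻⁾/Z(A)` and `Q⁽⁻⁾/Z(Q)` are semiprime, and `Q⁽⁻⁾/Z(Q)` is a Lie algebra of
quotients of `A⁽⁻⁾/Z(A)` (all statements being read modulo the centre). -/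
theorem stmt10 {R : Type*} [NonUnitalRing R] (A : NonUnitalSubring R)
    (hsemi : IsSemiprimeSub R A)
    (h2 : ∀ x ∈ A, x + x = 0 → x = 0)
    (hQs : IsSymmetricQuotientRingOf R A) :
    LieModCentreSemiprime R A ∧
    LieModCentreSemiprime R (⊤ : NonUnitalSubring R) ∧
    (∀ q : R, q ∉ ringCentre R →
      ∃ K : AddSubgroup R, IsLieIdealOfSub R A K ∧
        (∀ x ∈ A, (∀ k ∈ K, x * k - k * x ∈ ringCentre R) → x ∈ ringCentre R) ∧
        (∃ k ∈ K, k * q - q * k ∉ ringCentre R) ∧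
        (∀ k ∈ K, ∃ a ∈ A, k * q - q * k - a ∈ ringCentre R)) := by
  have hA : IsElementwiseSemiprime A := hsemi.isElementwiseSemiprime
  refine ⟨hA.lieModCentreSemiprime h2 fun x _ => hQs.mem_ringCentre_of_commute,
    (hQs.isElementwiseSemiprime_top hA).lieModCentreSemiprime
      (fun _ _ => hQs.eq_zero_of_add_self_eq_zero h2) fun _ _ hx w => hx w trivial,
    fun q hq => ?_⟩
  obtain ⟨I, hI, hIq⟩ := hQs.1 q
  have hcentral : ∀ x : R, (∀ k ∈ I, ⁅x, k⁆ ∈ ringCentre R) → (∀ k ∈ I, ⁅x, k⁆ ∈ A) →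
      x ∈ ringCentre R := fun x hc hxA => hQs.mem_ringCentre_of_commute_ideal hI fun k hk =>
    sub_eq_zero.1 (hA.lie_eq_zero_of_lie_mem_ringCentre h2 hI.1 hc hxA hk)
  refine ⟨I, hI.1.isLieIdealOfSub,
    fun x hx hxc => hcentral x hxc fun k hk => NonUnitalSubring.lie_mem hx (hI.1.1 hk), ?_,
    fun k hk => ⟨k * q - q * k, A.sub_mem (hIq k hk).2 (hIq k hk).1, by
      rw [sub_self]; exact ringCentre.zero_mem⟩⟩
  by_contra! h
  refine hq (hcentral q (fun k hk => ?_) fun k hk => A.sub_mem (hIq k hk).1 (hIq k hk).2)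
  rw [Ring.lie_def, ← neg_sub]
  exact ringCentre.neg_mem (h k hk)
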